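/- arXiv:2208.01133 — 3 statements merged into one kernel-verified Lean document; each statement's English description precedes it below -/
import Mathlib

section
/- Let f : X → Z be a group homomorphism with ker f ⊆ Z(X), let B be a group, and let φ, ψ : B → Aut(X) be two actions of B on X such that f(φ(b)(x)) = f(ψ(b)(x)) for all b ∈ B and x ∈ X. Then φ(b) and ψ(b) agree on the commutator subgroup [X,X] for every b ∈ B. -/
/-!
Write `φ b x = ψ b x * z x`. Since `f` kills `z x`, the correction `z x` lies in `ker f`, hence is
central, and a commutator does not see central factors: `φ b ⁅x, y⁆ = ⁅φ b x, φ b y⁆` equals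
`⁅ψ b x, ψ b y⁆ = ψ b ⁅x, y⁆`. So `φ b` and `ψ b` agree on all commutators, hence on the subgroup
they generate.
-/

open Subgroup
open scoped commutatorElement

section

variable {G : Type*} [Group G] {z : G}

theorem commutatorElement_mul_mem_center_left (hz : z ∈ center G) (a c : G) :
    ⁅a * z, c⁆ = ⁅a, c⁆ := by
  calc ⁅a * z, c⁆ = a * (z * c * z⁻¹) * a⁻¹ * c⁻¹ := by simp only [commutatorElement_def]; group
    _ = ⁅a, c⁆ := by rw [← mem_center_iff.mp hz c]; group

theorem commutatorElement_mul_mem_center_right (hz : z ∈ center G) (a c : G) :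
    ⁅a, c * z⁆ = ⁅a, c⁆ := by
  calc ⁅a, c * z⁆ = a * c * (z * a⁻¹ * z⁻¹) * c⁻¹ := by simp only [commutatorElement_def]; group
    _ = ⁅a, c⁆ := by rw [← mem_center_iff.mp hz a⁻¹]; group

end

theorem MonoidHom.commutator_le_eqLocus_of_inv_mul_mem_center {X Y : Type*} [Group X] [Group Y]
    {g₁ g₂ : X →* Y} (h : ∀ x, (g₂ x)⁻¹ * g₁ x ∈ center Y) :
    commutator X ≤ g₁.eqLocus g₂ := by
  have hg₁ (x : X) : g₁ x = g₂ x * ((g₂ x)⁻¹ * g₁ x) := by group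
  rw [commutator_def, commutator_le]
  intro x _ y _
  change g₁ ⁅x, y⁆ = g₂ ⁅x, y⁆
  rw [map_commutatorElement, map_commutatorElement, hg₁ x, hg₁ y,
    commutatorElement_mul_mem_center_left (h x), commutatorElement_mul_mem_center_right (h y)]

theorem MonoidHom.commutator_le_eqLocus_of_comp_eq {X Y Z : Type*} [Group X] [Group Y] [Group Z]
    {f : Y →* Z} (hker : f.ker ≤ center Y) {g₁ g₂ : X →* Y} (h : ∀ x, f (g₁ x) = f (g₂ x)) :
    commutator X ≤ g₁.eqLocus g₂ :=
  commutator_le_eqLocus_of_inv_mul_mem_center fun x ↦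
    hker <| by rw [MonoidHom.mem_ker, map_mul, map_inv, h x, inv_mul_cancel]

/-- Two B-actions on X agreeing after composing with a map f with central kernel
agree on the commutator subgroup of X. -/
theorem actions_agree_on_commutator {X Z B : Type*} [Group X] [Group Z] [Group B]
    (f : X →* Z) (hker : f.ker ≤ Subgroup.center X)
    (φ ψ : B →* MulAut X)
    (h : ∀ (b : B) (x : X), f (φ b x) = f (ψ b x)) :
    ∀ (b : B), ∀ w ∈ commutator X, φ b w = ψ b w := fun b _ hw ↦
  MonoidHom.commutator_le_eqLocus_of_comp_eq (g₁ := (φ b).toMonoidHom)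
    (g₂ := (ψ b).toMonoidHom) hker (h b) hw
end

section
/- If X is a perfect group, then the center of Aut(X) is trivial. -/
/-!
An automorphism `f` central in `Aut X` commutes with every inner automorphism, and
`f ∘ conj g ∘ f⁻¹ = conj (f g)`, so `f g = g * z` with `z` central in `X`. Central factors do not
change commutators, hence `f` fixes every commutator and therefore all of `X = [X, X]`.
-/

open scoped commutatorElement

theorem commutatorElement_mul_mul_of_mem_center {G : Type*} [Group G] (a b : G) {z w : G}
    (hz : z ∈ Subgroup.center G) (hw : w ∈ Subgroup.center G) : ⁅a * z, b * w⁆ = ⁅a, b⁆ := by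
  rw [Subgroup.mem_center_iff] at hz hw
  calc ⁅a * z, b * w⁆ = a * (z * (b * w)) * z⁻¹ * a⁻¹ * w⁻¹ * b⁻¹ := by group
    _ = a * b * (w * a⁻¹) * w⁻¹ * b⁻¹ := by rw [← hz]; group
    _ = ⁅a, b⁆ := by rw [← hw]; group

namespace MulAut

variable {G : Type*} [Group G]

theorem conj_eq_one_iff {g : G} : conj g = 1 ↔ g ∈ Subgroup.center G := by
  simp only [Subgroup.mem_center_iff, MulEquiv.ext_iff, conj_apply, one_apply,
    mul_inv_eq_iff_eq_mul]
  exact forall_congr' fun _ => eq_comm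

theorem mul_conj_mul_inv (f : MulAut G) (g : G) : f * conj g * f⁻¹ = conj (f g) := by
  ext x
  simp [inv_apply, mul_apply]

theorem inv_mul_apply_mem_center {f : MulAut G} (hf : f ∈ Subgroup.center (MulAut G)) (g : G) :
    g⁻¹ * f g ∈ Subgroup.center G := by
  rw [← conj_eq_one_iff, map_mul, map_inv, ← mul_conj_mul_inv, ← Subgroup.mem_center_iff.mp hf,
    mul_inv_cancel_right, inv_mul_cancel]

theorem apply_commutatorElement_of_mem_center {f : MulAut G}
    (hf : f ∈ Subgroup.center (MulAut G)) (a b : G) : f ⁅a, b⁆ = ⁅a, b⁆ := by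
  rw [map_commutatorElement, ← mul_inv_cancel_left a (f a), ← mul_inv_cancel_left b (f b),
    commutatorElement_mul_mul_of_mem_center a b (inv_mul_apply_mem_center hf a)
      (inv_mul_apply_mem_center hf b)]

theorem apply_eq_self_of_mem_center_of_mem_commutator {f : MulAut G}
    (hf : f ∈ Subgroup.center (MulAut G)) {x : G} (hx : x ∈ commutator G) : f x = x := by
  rw [commutator_eq_closure] at hx
  refine MonoidHom.eqOn_closure (f := (f : G →* G)) (g := MonoidHom.id G) ?_ hx
  rintro _ ⟨a, b, rfl⟩
  exact apply_commutatorElement_of_mem_center hf a b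

end MulAut

/-- If X is a perfect group then the center of Aut(X) is trivial. -/
theorem center_mulAut_eq_bot_of_perfect {X : Type*} [Group X]
    (hX : commutator X = ⊤) :
    Subgroup.center (MulAut X) = ⊥ := by
  refine (Subgroup.eq_bot_iff_forall _).mpr fun f hf => MulEquiv.ext fun x => ?_
  exact MulAut.apply_eq_self_of_mem_center_of_mem_commutator hf (hX ▸ Subgroup.mem_top x)
end

section
/- Let f : X → Z be a surjective group homomorphism with ker f ⊆ Z(X), and suppose a group B acts on X and on Z such that f is B-equivariant for two (possibly different) actions φ, ψ of B on X mapping to the same action of B on Z. Then for every b ∈ B and every element w of the commutator subgroup [X,X], φ(b)(w) = ψ(b)(w). -/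
open scoped commutatorElement

open Subgroup

section CentralFactors

variable {G : Type*} [Group G] {c : G}

theorem commutatorElement_mul_right_of_mem_center (hc : c ∈ center G) (a b : G) :
    ⁅a, b * c⁆ = ⁅a, b⁆ := by
  have hac : ⁅a, c⁆ = 1 := commutatorElement_eq_one_iff_mul_comm.mpr (mem_center_iff.mp hc a)
  rw [commutatorElement_mul_right_eq_mul_conj, hac, mul_one, mul_inv_cancel_right]

theorem commutatorElement_mul_left_of_mem_center (hc : c ∈ center G) (a b : G) :
    ⁅a * c, b⁆ = ⁅a, b⁆ := by
  rw [← commutatorElement_inv, commutatorElement_mul_right_of_mem_center hc, commutatorElement_inv]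

end CentralFactors

/-- Writing `φ x = ψ x * c x` with `c x` central, the central factors drop out of every
commutator, so `φ` and `ψ` agree on the generators `⁅x, y⁆` of the commutator subgroup. -/
theorem MonoidHom.commutator_le_eqLocus_of_inv_mul_mem_center_s17 {G H : Type*} [Group G] [Group H]
    (φ ψ : G →* H) (h : ∀ x, (ψ x)⁻¹ * φ x ∈ center H) :
    commutator G ≤ φ.eqLocus ψ := by
  rw [commutator_eq_closure, closure_le]
  rintro _ ⟨x, y, rfl⟩
  have hφ : ∀ z, φ z = ψ z * ((ψ z)⁻¹ * φ z) := fun z => (mul_inv_cancel_left _ _).symm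
  change φ ⁅x, y⁆ = ψ ⁅x, y⁆
  rw [map_commutatorElement, map_commutatorElement, hφ x, hφ y,
    commutatorElement_mul_left_of_mem_center (h x),
    commutatorElement_mul_right_of_mem_center (h y)]

theorem lifted_actions_agree_on_commutator_general {X Z B : Type*} [Group X] [Group Z] [Group B]
    (f : X →* Z) (hker : f.ker ≤ Subgroup.center X)
    (φ ψ : B →* MulAut X) (ζ : B →* MulAut Z)
    (hφ : ∀ (b : B) (x : X), f (φ b x) = ζ b (f x))
    (hψ : ∀ (b : B) (x : X), f (ψ b x) = ζ b (f x)) :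
    ∀ (b : B), ∀ w ∈ commutator X, φ b w = ψ b w := by
  intro b w hw
  have hcentral : ∀ x, (ψ b x)⁻¹ * φ b x ∈ center X := fun x =>
    hker (by rw [MonoidHom.mem_ker, map_mul, map_inv, hφ, hψ, inv_mul_cancel])
  exact MonoidHom.commutator_le_eqLocus_of_inv_mul_mem_center_s17
    (φ b).toMonoidHom (ψ b).toMonoidHom hcentral hw

/-- Two B-actions on X lifting the same action on Z along a surjective central
extension f agree on the commutator subgroup of X. -/
theorem lifted_actions_agree_on_commutator {X Z B : Type*} [Group X] [Group Z] [Group B]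
    (f : X →* Z) (hf : Function.Surjective f) (hker : f.ker ≤ Subgroup.center X)
    (φ ψ : B →* MulAut X) (ζ : B →* MulAut Z)
    (hφ : ∀ (b : B) (x : X), f (φ b x) = ζ b (f x))
    (hψ : ∀ (b : B) (x : X), f (ψ b x) = ζ b (f x)) :
    ∀ (b : B), ∀ w ∈ commutator X, φ b w = ψ b w :=
  lifted_actions_agree_on_commutator_general f hker φ ψ ζ hφ hψ
end
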